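/- Let n ≥ 1, let 0 < b ≤ 1, let y₁, …, yₙ satisfy b ≤ yᵢ ≤ 1 for all i, and let x₁, …, xₙ ∈ [0,1] have average ā := (x₁ + ⋯ + xₙ)/n < b. Then Σ_{i : xᵢ < b} d(xᵢ, yᵢ) ≥ Σ_{i : xᵢ < b} d(xᵢ, b) ≥ n·d(ā, b), where d(x,y) = x·log(x/y) + (1−x)·log((1−x)/(1−y)) is the Bernoulli KL divergence, interpreted as a value in [0, +∞] with the conventions 0·log 0 = 0 and d(x,y) = +∞ when y ∈ {0,1} and x ≠ y. -/

import Mathlib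

/-!
For `b < 1`, `d(·, b)` is finite, convex on `[0, 1]` (it is minus the binary entropy plus an
affine function) and attains its minimum `0` at `b` (Gibbs). The first inequality is the
monotonicity of `d(x, ·)` on `[x, 1]`. For the second, truncate each `xᵢ` at `b`: this leaves the
sum over `xᵢ < b` unchanged, adds only terms `d(b, b) = 0`, and lowers the mean to some `a' ≤ ā`;
Jensen bounds `n · d(a', b)` by the sum, and `d(·, b)` is antitone on `[0, b]`. For `b = 1`, some
`xᵢ < 1`, so the right-hand side is `+∞`.
-/

open Set
open scoped ENNReal

/-- Bernoulli Kullback–Leibler divergence with values in `[0, +∞]`, with the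
conventions `0·log 0 = 0` and `d(x,y) = +∞` when `y ∈ {0,1}` and `x ≠ y`. -/
noncomputable def bernKL (x y : ℝ) : ℝ≥0∞ :=
  if (y = 0 ∨ y = 1) ∧ x ≠ y then ⊤
  else ENNReal.ofReal (x * Real.log (x/y) + (1-x) * Real.log ((1-x)/(1-y)))

open Real InformationTheory

noncomputable def bernKLReal (x y : ℝ) : ℝ :=
  x * log (x / y) + (1 - x) * log ((1 - x) / (1 - y))

lemma bernKL_eq_ofReal {x y : ℝ} (hy0 : y ≠ 0) (hy1 : y ≠ 1) :
    bernKL x y = ENNReal.ofReal (bernKLReal x y) :=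
  if_neg fun h => h.1.elim hy0 hy1

lemma bernKL_one_right {x : ℝ} (hx : x ≠ 1) : bernKL x 1 = ⊤ :=
  if_pos ⟨Or.inr rfl, hx⟩

lemma bernKLReal_self (x : ℝ) : bernKLReal x x = 0 := by
  simp [bernKLReal]

lemma bernKL_self (x : ℝ) : bernKL x x = 0 := by
  rw [bernKL, if_neg fun h => h.2 rfl, ← bernKLReal, bernKLReal_self, ENNReal.ofReal_zero]

lemma mul_log_div_eq_sub (x : ℝ) {y : ℝ} (hy : y ≠ 0) :
    x * log (x / y) = x * log x - x * log y := by
  rcases eq_or_ne x 0 with rfl | hx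
  · simp
  · rw [log_div hx hy, mul_sub]

lemma bernKLReal_eq_neg_binEntropy (x : ℝ) {y : ℝ} (hy0 : y ≠ 0) (hy1 : y ≠ 1) :
    bernKLReal x y = -binEntropy x - x * log y - (1 - x) * log (1 - y) := by
  rw [bernKLReal, binEntropy, mul_log_div_eq_sub x hy0,
    mul_log_div_eq_sub (1 - x) (sub_ne_zero.2 hy1.symm), log_inv, log_inv]
  ring

lemma bernKLReal_eq_klFun (x : ℝ) {y : ℝ} (hy0 : y ≠ 0) (hy1 : y ≠ 1) :
    bernKLReal x y = y * klFun (x / y) + (1 - y) * klFun ((1 - x) / (1 - y)) := by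
  have hy1' : 1 - y ≠ 0 := sub_ne_zero.2 hy1.symm
  simp only [bernKLReal, klFun]
  field_simp
  ring

lemma bernKLReal_nonneg {x y : ℝ} (hx : x ∈ Icc 0 1) (hy : y ∈ Ioo 0 1) :
    0 ≤ bernKLReal x y := by
  rw [bernKLReal_eq_klFun x hy.1.ne' hy.2.ne]
  have hy1 : 0 < 1 - y := sub_pos.2 hy.2
  exact add_nonneg
    (mul_nonneg hy.1.le (klFun_nonneg (div_nonneg hx.1 hy.1.le)))
    (mul_nonneg hy1.le (klFun_nonneg (div_nonneg (sub_nonneg.2 hx.2) hy1.le)))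

lemma isMinOn_bernKLReal_left {y : ℝ} (hy : y ∈ Ioo 0 1) :
    IsMinOn (fun x => bernKLReal x y) (Icc 0 1) y :=
  isMinOn_iff.2 fun x hx => by simpa only [bernKLReal_self] using bernKLReal_nonneg hx hy

lemma convexOn_bernKLReal_left {y : ℝ} (hy0 : y ≠ 0) (hy1 : y ≠ 1) :
    ConvexOn ℝ (Icc 0 1) fun x => bernKLReal x y := by
  have hlin : ConvexOn ℝ (Icc 0 1) fun x : ℝ => -(x * log y) - (1 - x) * log (1 - y) := by
    refine ⟨convex_Icc 0 1, fun p _ q _ a b _ _ hab => le_of_eq ?_⟩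
    simp only [smul_eq_mul]
    linear_combination log (1 - y) * hab
  refine (strictConcave_binEntropy.concaveOn.neg.add hlin).congr fun x _ => ?_
  rw [bernKLReal_eq_neg_binEntropy x hy0 hy1, Pi.add_apply, Pi.neg_apply]
  ring

/-- The lower bounds `log t ≥ 1 - 1/t` at `t = u/v` and `t = (1-u)/(1-v)` leave the difference
`d(x,v) - d(x,u)` at least `(v - u)(u - x) / (u (1 - u))`. -/
lemma bernKLReal_le_bernKLReal_right {x u v : ℝ} (hx : 0 ≤ x) (hxu : x ≤ u) (hu : 0 < u)
    (huv : u ≤ v) (hv : v < 1) : bernKLReal x u ≤ bernKLReal x v := by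
  have hv0 : 0 < v := hu.trans_le huv
  have hu1 : 0 < 1 - u := by linarith
  have hv1 : 0 < 1 - v := by linarith
  have hlog : 1 - v / u ≤ log u - log v := by
    simpa [log_div hu.ne' hv0.ne'] using one_sub_inv_le_log_of_pos (div_pos hu hv0)
  have hlog' : 1 - (1 - v) / (1 - u) ≤ log (1 - u) - log (1 - v) := by
    simpa [log_div hu1.ne' hv1.ne'] using one_sub_inv_le_log_of_pos (div_pos hu1 hv1)
  have hgap : 0 ≤ x * (1 - v / u) + (1 - x) * (1 - (1 - v) / (1 - u)) := by
    have : x * (1 - v / u) + (1 - x) * (1 - (1 - v) / (1 - u)) =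
        (v - u) * (u - x) / (u * (1 - u)) := by
      field_simp
      ring
    rw [this]
    exact div_nonneg (mul_nonneg (by linarith) (by linarith)) (mul_pos hu hu1).le
  rw [bernKLReal_eq_neg_binEntropy x hu.ne' (by linarith),
    bernKLReal_eq_neg_binEntropy x hv0.ne' (by linarith)]
  nlinarith [mul_le_mul_of_nonneg_left hlog hx,
    mul_le_mul_of_nonneg_left hlog' (by linarith : 0 ≤ 1 - x)]

lemma bernKL_le_bernKL_right {x u v : ℝ} (hx : 0 ≤ x) (hxu : x ≤ u) (huv : u ≤ v) (hv : v ≤ 1) :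
    bernKL x u ≤ bernKL x v := by
  rcases hxu.eq_or_lt with rfl | hxu
  · rw [bernKL_self]
    exact zero_le
  rcases hv.eq_or_lt with rfl | hv
  · rw [bernKL_one_right (hxu.trans_le huv).ne]
    exact le_top
  have hu : 0 < u := hx.trans_lt hxu
  rw [bernKL_eq_ofReal hu.ne' (huv.trans_lt hv).ne, bernKL_eq_ofReal (hu.trans_le huv).ne' hv.ne]
  exact ENNReal.ofReal_le_ofReal (bernKLReal_le_bernKLReal_right hx hxu.le hu huv hv)

lemma ConvexOn.antitoneOn_inter_Iic_of_isMinOn {s : Set ℝ} {f : ℝ → ℝ} {c : ℝ}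
    (hf : ConvexOn ℝ s f) (hc : c ∈ s) (hmin : IsMinOn f s c) : AntitoneOn f (s ∩ Iic c) := by
  rintro u ⟨hu, -⟩ v ⟨hv, hvc : v ≤ c⟩ huv
  rcases huv.eq_or_lt with rfl | huv
  · rfl
  rcases hvc.eq_or_lt with rfl | hvc
  · exact hmin hu
  refine hf.le_left_of_right_le hu hc ?_ (hmin hv)
  rw [openSegment_eq_Ioo (huv.trans hvc)]
  exact ⟨huv, hvc⟩

lemma ConvexOn.card_mul_map_average_le_sum_filter_lt {ι : Type*} [Fintype ι] {s : Set ℝ}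
    {f : ℝ → ℝ} {c : ℝ} (hf : ConvexOn ℝ s f) (hc : c ∈ s) (hmin : IsMinOn f s c) (hfc : f c = 0)
    {x : ι → ℝ} (hx : ∀ i, x i ∈ s) (havg : (∑ i, x i) / Fintype.card ι ≤ c) :
    (Fintype.card ι : ℝ) * f ((∑ i, x i) / Fintype.card ι) ≤
      ∑ i ∈ Finset.univ.filter (fun i => x i < c), f (x i) := by
  rcases (Nat.cast_nonneg (Fintype.card ι) : (0 : ℝ) ≤ Fintype.card ι).eq_or_lt with hn | hn
  · rw [← hn, zero_mul]
    exact Finset.sum_nonneg fun i _ => hfc ▸ hmin (hx i)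
  set n : ℝ := (Fintype.card ι : ℝ)
  have hp : ∀ i, min (x i) c ∈ s := fun i => by
    rcases min_choice (x i) c with h | h <;> simp only [h, hx i, hc]
  have hsum : ∑ i ∈ Finset.univ.filter (fun i => x i < c), f (x i) = ∑ i, f (min (x i) c) := by
    rw [Finset.sum_filter]
    refine Finset.sum_congr rfl fun i _ => ?_
    split_ifs with h
    · rw [min_eq_left h.le]
    · rw [min_eq_right (not_lt.1 h), hfc]
  have hmean : ∀ z : ι → ℝ, (∑ i, z i) / n = ∑ i, n⁻¹ • z i := fun z => by
    simp only [smul_eq_mul, ← Finset.mul_sum, div_eq_inv_mul]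
  have hw : ∑ _i : ι, n⁻¹ = 1 := by
    rw [Finset.sum_const, Finset.card_univ, nsmul_eq_mul, mul_inv_cancel₀ hn.ne']
  have hmem : ∀ z : ι → ℝ, (∀ i, z i ∈ s) → (∑ i, z i) / n ∈ s := fun z hz => by
    rw [hmean]
    exact hf.1.sum_mem (fun _ _ => inv_nonneg.2 hn.le) hw fun i _ => hz i
  have hjensen : f ((∑ i, min (x i) c) / n) ≤ (∑ i, f (min (x i) c)) / n := by
    simpa only [hmean] using hf.map_sum_le (fun _ _ => inv_nonneg.2 hn.le) hw fun i _ => hp i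
  have hle : (∑ i, min (x i) c) / n ≤ (∑ i, x i) / n :=
    div_le_div_of_nonneg_right (Finset.sum_le_sum fun i _ => min_le_left _ _) hn.le
  have hmono : f ((∑ i, x i) / n) ≤ f ((∑ i, min (x i) c) / n) :=
    hf.antitoneOn_inter_Iic_of_isMinOn hc hmin ⟨hmem _ hp, hle.trans havg⟩ ⟨hmem x hx, havg⟩ hle
  rw [hsum, ← le_div_iff₀' hn]
  exact hmono.trans hjensen

theorem stmt7 (n : ℕ) (hn : 1 ≤ n) (b : ℝ) (hb : 0 < b) (hb1 : b ≤ 1)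
    (x y : Fin n → ℝ) (hy : ∀ i, y i ∈ Icc b 1) (hx : ∀ i, x i ∈ Icc (0:ℝ) 1)
    (havg : (∑ i, x i) / n < b) :
    (∑ i ∈ Finset.univ.filter (fun i => x i < b), bernKL (x i) b) ≤
      (∑ i ∈ Finset.univ.filter (fun i => x i < b), bernKL (x i) (y i)) ∧
    (n : ℝ≥0∞) * bernKL ((∑ i, x i) / n) b ≤
      ∑ i ∈ Finset.univ.filter (fun i => x i < b), bernKL (x i) b := by
  refine ⟨Finset.sum_le_sum fun i hi =>
    bernKL_le_bernKL_right (hx i).1 (Finset.mem_filter.1 hi).2.le (hy i).1 (hy i).2, ?_⟩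
  rcases hb1.lt_or_eq with hb1 | rfl
  · have hbKL : ∀ z, bernKL z b = ENNReal.ofReal (bernKLReal z b) :=
      fun z => bernKL_eq_ofReal hb.ne' hb1.ne
    have hreal := (convexOn_bernKLReal_left hb.ne' hb1.ne).card_mul_map_average_le_sum_filter_lt
      ⟨hb.le, hb1.le⟩ (isMinOn_bernKLReal_left ⟨hb, hb1⟩) (bernKLReal_self b) hx
      (by simpa only [Fintype.card_fin] using havg.le)
    simp only [Fintype.card_fin] at hreal
    rw [hbKL, ← ENNReal.ofReal_natCast, ← ENNReal.ofReal_mul n.cast_nonneg]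
    refine (ENNReal.ofReal_le_ofReal hreal).trans_eq ?_
    rw [ENNReal.ofReal_sum_of_nonneg fun i _ => bernKLReal_nonneg (hx i) ⟨hb, hb1⟩]
    simp only [hbKL]
  · obtain ⟨i, hi⟩ : ∃ i, x i < 1 := by
      have hn0 : (0 : ℝ) < n := by exact_mod_cast hn
      have : ∑ i, x i < ∑ _i : Fin n, (1 : ℝ) := by
        simpa [div_lt_iff₀ hn0] using havg
      simpa using Finset.exists_lt_of_sum_lt this
    rw [ENNReal.sum_eq_top.2 ⟨i, by simpa using hi, bernKL_one_right hi.ne⟩]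
    exact le_top
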